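/- arXiv:2308.14237 — 2 statements merged into one kernel-verified Lean document; each statement's English description precedes it below -/
import Mathlib

section
/- The finitely presented group $G$ has exactly $294$ elements. -/
/-- The free group on four generators `t₁,…,t₄` (indices 0–3). -/
abbrev F4 : Type := FreeGroup (Fin 4)

/-- The generators of the free group on four letters. -/
def t (i : Fin 4) : F4 := FreeGroup.of i

/-- The relations `t₁² = t₂⁷ = (t₁t₂)² = t₃⁷ = t₄³ = 1`, `t₁t₃ = t₃t₁`, `t₂t₃ = t₃t₂`,
`t₄t₁t₄⁻¹ = t₁`, `t₄t₂t₄⁻¹ = t₂⁴`, `t₄t₃t₄⁻¹ = t₃²`. -/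
def relsG : Set F4 :=
  { t 0 ^ 2, t 1 ^ 7, (t 0 * t 1) ^ 2, t 2 ^ 7, t 3 ^ 3,
    (t 0 * t 2) * (t 2 * t 0)⁻¹,
    (t 1 * t 2) * (t 2 * t 1)⁻¹,
    (t 3 * t 0 * (t 3)⁻¹) * (t 0)⁻¹,
    (t 3 * t 1 * (t 3)⁻¹) * (t 1 ^ 4)⁻¹,
    (t 3 * t 2 * (t 3)⁻¹) * (t 2 ^ 2)⁻¹ }

/-- The finitely presented group `G` with generators `t₁,…,t₄`. -/
abbrev G : Type := PresentedGroup relsG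

/-- The images of the generators `t₁,…,t₄` in `G`. -/
def tg (i : Fin 4) : G := PresentedGroup.of i

/-!
Every element of `G` can be written as `t₁ᵃ t₂ᵇ t₃ᶜ t₄ᵈ` with `a < 2`, `b < 7`, `c < 7`,
`d < 3`: the relations let one push each generator to the right through such a word, and
since every generator has finite order, right multiplication by generators already reaches
all of `G`. So `|G| ≤ 2 · 7 · 7 · 3 = 294`. Conversely, `G` acts on `(ℤ/7)²` by the affine
maps `t₁ : (u, v) ↦ (-u, v)`, `t₂ : (u, v) ↦ (u + 1, v)`, `t₃ : (u, v) ↦ (u, v + 1)`,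
`t₄ : (u, v) ↦ (4u, 2v)`, and the 294 normal forms act as distinct permutations.
-/

open PresentedGroup

theorem pow_mul_pow_eq_pow_mul_pow_of_mul_eq {M : Type*} [Monoid M] {a x : M} {k : ℕ}
    (h : a * x = x ^ k * a) (d m : ℕ) : a ^ d * x ^ m = x ^ (k ^ d * m) * a ^ d := by
  induction d generalizing m with
  | zero => simp
  | succ d ih =>
    have hm : a * x ^ m = x ^ (k * m) * a := by
      rw [pow_mul]; exact (SemiconjBy.pow_right h m :)
    rw [pow_succ, mul_assoc, hm, ← mul_assoc, ih, mul_assoc, ← pow_succ]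
    congr 2; ring

theorem tg_zero_sq : tg 0 ^ 2 = 1 := one_of_mem (by simp [relsG] : t 0 ^ 2 ∈ relsG)

theorem tg_one_pow_seven : tg 1 ^ 7 = 1 := one_of_mem (by simp [relsG] : t 1 ^ 7 ∈ relsG)

theorem tg_zero_mul_tg_one_sq : (tg 0 * tg 1) ^ 2 = 1 :=
  one_of_mem (by simp [relsG] : (t 0 * t 1) ^ 2 ∈ relsG)

theorem tg_two_pow_seven : tg 2 ^ 7 = 1 := one_of_mem (by simp [relsG] : t 2 ^ 7 ∈ relsG)

theorem tg_three_pow_three : tg 3 ^ 3 = 1 := one_of_mem (by simp [relsG] : t 3 ^ 3 ∈ relsG)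

theorem commute_tg_zero_tg_two : Commute (tg 0) (tg 2) :=
  mk_eq_mk_of_mul_inv_mem (by simp [relsG] : t 0 * t 2 * (t 2 * t 0)⁻¹ ∈ relsG)

theorem commute_tg_one_tg_two : Commute (tg 1) (tg 2) :=
  mk_eq_mk_of_mul_inv_mem (by simp [relsG] : t 1 * t 2 * (t 2 * t 1)⁻¹ ∈ relsG)

theorem commute_tg_three_tg_zero : Commute (tg 3) (tg 0) :=
  mul_inv_eq_iff_eq_mul.mp <|
    mk_eq_mk_of_mul_inv_mem (by simp [relsG] : t 3 * t 0 * (t 3)⁻¹ * (t 0)⁻¹ ∈ relsG)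

theorem tg_three_mul_tg_one : tg 3 * tg 1 = tg 1 ^ 4 * tg 3 :=
  mul_inv_eq_iff_eq_mul.mp <|
    mk_eq_mk_of_mul_inv_mem (by simp [relsG] : t 3 * t 1 * (t 3)⁻¹ * (t 1 ^ 4)⁻¹ ∈ relsG)

theorem tg_three_mul_tg_two : tg 3 * tg 2 = tg 2 ^ 2 * tg 3 :=
  mul_inv_eq_iff_eq_mul.mp <|
    mk_eq_mk_of_mul_inv_mem (by simp [relsG] : t 3 * t 2 * (t 3)⁻¹ * (t 2 ^ 2)⁻¹ ∈ relsG)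

theorem tg_one_mul_tg_zero : tg 1 * tg 0 = tg 0 * tg 1 ^ 6 := by
  have inv_zero : (tg 0)⁻¹ = tg 0 := inv_eq_of_mul_eq_one_right (by rw [← sq, tg_zero_sq])
  have inv_one : (tg 1)⁻¹ = tg 1 ^ 6 :=
    inv_eq_of_mul_eq_one_right (by rw [← pow_succ', tg_one_pow_seven])
  calc tg 1 * tg 0 = (tg 0)⁻¹ * (tg 0 * tg 1) ^ 2 * (tg 1)⁻¹ := by
        simp only [sq, mul_assoc, inv_mul_cancel_left, mul_inv_cancel, mul_one]
    _ = tg 0 * tg 1 ^ 6 := by rw [tg_zero_mul_tg_one_sq, mul_one, inv_zero, inv_one]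

def nf (a b c d : ℕ) : G := tg 0 ^ a * tg 1 ^ b * tg 2 ^ c * tg 3 ^ d

theorem nf_mul_tg_zero (a b c d : ℕ) : nf a b c d * tg 0 = nf (a + 1) (6 * b) c d := by
  have h3 : tg 3 ^ d * tg 0 = tg 0 * tg 3 ^ d := (commute_tg_three_tg_zero.pow_left d).eq
  have h2 : tg 2 ^ c * tg 0 = tg 0 * tg 2 ^ c := (commute_tg_zero_tg_two.symm.pow_left c).eq
  have h1 : tg 1 ^ b * tg 0 = tg 0 * tg 1 ^ (6 * b) := by
    rw [pow_mul]
    exact (SemiconjBy.pow_right (tg_one_mul_tg_zero.symm : SemiconjBy _ _ _) b).symm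
  simp only [nf, mul_assoc]
  rw [h3, ← mul_assoc (tg 2 ^ c), h2, mul_assoc, ← mul_assoc (tg 1 ^ b), h1, pow_succ]
  simp only [mul_assoc]

theorem nf_mul_tg_one (a b c d : ℕ) : nf a b c d * tg 1 = nf a (b + 4 ^ d) c d := by
  have h3 : tg 3 ^ d * tg 1 = tg 1 ^ 4 ^ d * tg 3 ^ d := by
    simpa using pow_mul_pow_eq_pow_mul_pow_of_mul_eq tg_three_mul_tg_one d 1
  have h2 : tg 2 ^ c * tg 1 ^ 4 ^ d = tg 1 ^ 4 ^ d * tg 2 ^ c :=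
    (commute_tg_one_tg_two.symm.pow_pow c (4 ^ d)).eq
  simp only [nf, mul_assoc]
  rw [h3, ← mul_assoc (tg 2 ^ c), h2, pow_add]
  simp only [mul_assoc]

theorem nf_mul_tg_two (a b c d : ℕ) : nf a b c d * tg 2 = nf a b (c + 2 ^ d) d := by
  have h3 : tg 3 ^ d * tg 2 = tg 2 ^ 2 ^ d * tg 3 ^ d := by
    simpa using pow_mul_pow_eq_pow_mul_pow_of_mul_eq tg_three_mul_tg_two d 1
  simp only [nf, mul_assoc]
  rw [h3, pow_add]
  simp only [mul_assoc]

theorem nf_mul_tg_three (a b c d : ℕ) : nf a b c d * tg 3 = nf a b c (d + 1) := by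
  simp only [nf, mul_assoc, pow_succ]

theorem nf_mod (a b c d : ℕ) : nf a b c d = nf (a % 2) (b % 7) (c % 7) (d % 3) := by
  rw [nf, pow_eq_pow_mod a tg_zero_sq, pow_eq_pow_mod b tg_one_pow_seven,
    pow_eq_pow_mod c tg_two_pow_seven, pow_eq_pow_mod d tg_three_pow_three, nf]

theorem isOfFinOrder_tg (i : Fin 4) : IsOfFinOrder (tg i) := by
  rw [isOfFinOrder_iff_pow_eq_one]
  fin_cases i
  exacts [⟨2, two_pos, tg_zero_sq⟩, ⟨7, by norm_num, tg_one_pow_seven⟩,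
    ⟨7, by norm_num, tg_two_pow_seven⟩, ⟨3, three_pos, tg_three_pow_three⟩]

theorem submonoid_closure_range_tg : Submonoid.closure (Set.range tg) = ⊤ := by
  rw [← Subgroup.closure_toSubmonoid_of_isOfFinOrder <| by
    rintro _ ⟨i, rfl⟩; exact isOfFinOrder_tg i]
  exact congrArg Subgroup.toSubmonoid (closure_range_of relsG)

theorem exists_nf (g : G) : ∃ a b c d, nf a b c d = g := by
  refine Submonoid.induction_of_closure_eq_top_right submonoid_closure_range_tg g
    ⟨0, 0, 0, 0, by simp [nf]⟩ ?_
  rintro _ _ ⟨i, rfl⟩ ⟨a, b, c, d, rfl⟩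
  fin_cases i
  exacts [⟨_, _, _, _, (nf_mul_tg_zero a b c d).symm⟩,
    ⟨_, _, _, _, (nf_mul_tg_one a b c d).symm⟩,
    ⟨_, _, _, _, (nf_mul_tg_two a b c d).symm⟩,
    ⟨_, _, _, _, (nf_mul_tg_three a b c d).symm⟩]

def nfFin (p : Fin 2 × Fin 7 × Fin 7 × Fin 3) : G := nf p.1 p.2.1 p.2.2.1 p.2.2.2

theorem nfFin_surjective : Function.Surjective nfFin := by
  intro g
  obtain ⟨a, b, c, d, rfl⟩ := exists_nf g
  exact ⟨(⟨a % 2, by omega⟩, ⟨b % 7, by omega⟩, ⟨c % 7, by omega⟩, ⟨d % 3, by omega⟩),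
    (nf_mod a b c d).symm⟩

def modelGen : Fin 4 → Equiv.Perm (ZMod 7 × ZMod 7) :=
  ![⟨fun p => (-p.1, p.2), fun p => (-p.1, p.2), by decide, by decide⟩,
    ⟨fun p => (p.1 + 1, p.2), fun p => (p.1 - 1, p.2), by decide, by decide⟩,
    ⟨fun p => (p.1, p.2 + 1), fun p => (p.1, p.2 - 1), by decide, by decide⟩,
    ⟨fun p => (4 * p.1, 2 * p.2), fun p => (2 * p.1, 4 * p.2), by decide, by decide⟩]

theorem modelGen_rels : ∀ r ∈ relsG, FreeGroup.lift modelGen r = 1 := by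
  intro r hr
  simp only [relsG, Set.mem_insert_iff, Set.mem_singleton_iff] at hr
  rcases hr with rfl | rfl | rfl | rfl | rfl | rfl | rfl | rfl | rfl | rfl <;>
    simp only [t, map_mul, map_pow, map_inv, FreeGroup.lift_apply_of] <;> decide

def toModel : G →* Equiv.Perm (ZMod 7 × ZMod 7) := toGroup modelGen_rels

theorem toModel_nf (a b c d : ℕ) :
    toModel (nf a b c d) =
      modelGen 0 ^ a * modelGen 1 ^ b * modelGen 2 ^ c * modelGen 3 ^ d := by
  simp only [nf, map_mul, map_pow, toModel, tg, toGroup.of]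

-- The 294 permutations are already told apart by their values at `(0, 0)` and `(1, 0)`,
-- which is far cheaper for the kernel to check than equality of permutations.
theorem injective_modelGen_nf : Function.Injective fun p : Fin 2 × Fin 7 × Fin 7 × Fin 3 =>
    modelGen 0 ^ (p.1 : ℕ) * modelGen 1 ^ (p.2.1 : ℕ) * modelGen 2 ^ (p.2.2.1 : ℕ) *
      modelGen 3 ^ (p.2.2.2 : ℕ) := by
  refine Function.Injective.of_comp (f := fun σ => (σ (0, 0), σ (1, 0))) ?_
  rw [← Set.injOn_univ, ← Finset.coe_univ]
  exact Finset.injOn_of_card_image_eq (by decide +kernel)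

theorem nfFin_injective : Function.Injective nfFin := by
  intro p q h
  apply injective_modelGen_nf
  simpa only [nfFin, toModel_nf] using congrArg toModel h

/-- The finitely presented group `G` has exactly 294 elements. -/
theorem card_G : Nat.card G = 294 := by
  rw [← Nat.card_eq_of_bijective nfFin ⟨nfFin_injective, nfFin_surjective⟩]
  simp
end

section
/- The images of the elements $bz^2b^{-1}z$ and $b^4$ under the quotient map $\bar\Gamma \to \bar\Gamma/\Gamma_Y$ generate the quotient group $\bar\Gamma/\Gamma_Y$. -/
/-- The free group on two generators `z` (index 0) and `b` (index 1). -/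
abbrev F2 : Type := FreeGroup (Fin 2)

/-- The generator `z` of the free group. -/
def zf : F2 := FreeGroup.of 0

/-- The generator `b` of the free group. -/
def bf : F2 := FreeGroup.of 1

/-- The relations of the group `Γ̄` from Cartwright–Steger. -/
def rels : Set F2 :=
  { zf ^ 7,
    (bf ^ (-2 : ℤ) * zf) ^ 3,
    (bf ^ 2 * zf ^ (-2 : ℤ) * bf ^ 2 * zf ^ 2) ^ 3,
    (bf ^ 2 * zf ^ (-2 : ℤ) * bf ^ 2 * zf ^ 4) ^ 3,
    bf ^ 3 * zf ^ (-2 : ℤ) * bf⁻¹ * zf ^ 2 * bf ^ (-2 : ℤ) * zf,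
    bf ^ 3 * zf * bf ^ 3 * zf ^ 3 * bf * zf ^ 2 * bf⁻¹ * zf⁻¹,
    bf ^ 3 * zf ^ 2 * bf ^ 2 * zf ^ (-2 : ℤ) * bf⁻¹ * zf⁻¹ * bf ^ (-3 : ℤ) * zf * bf⁻¹ * zf⁻¹ }

/-- The maximal arithmetic group `Γ̄`, given by its finite presentation. -/
abbrev GammaBar : Type := PresentedGroup rels

/-- The generator `z` of `Γ̄`. -/
def z : GammaBar := PresentedGroup.of 0

/-- The generator `b` of `Γ̄`. -/
def b : GammaBar := PresentedGroup.of 1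

/-- The subgroup `Γ_X` of `Γ̄`. -/
def GammaX : Subgroup GammaBar :=
  Subgroup.closure {b ^ 3, z * b ^ 3 * z, b * z ^ 2 * b⁻¹ * z}

/-- The subgroup `Γ_Y` of `Γ̄`. -/
def GammaY : Subgroup GammaBar :=
  Subgroup.closure {b ^ 3, (z * b * z⁻¹) ^ 3, b * z * b ^ 2 * z ^ (-2 : ℤ), z * b * z ^ 3 * b⁻¹}

/-- `Γ_Z`, the commutator subgroup of `Γ_X`: the subgroup of `Γ̄` generated by all
commutators `[g, h]` with `g, h ∈ Γ_X`. -/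
def GammaZ : Subgroup GammaBar := ⁅GammaX, GammaX⁆

/-!
Modulo `Γ_Y` we have `b³ = 1` and `b z b⁻¹ = b z b² = z²`. Conjugation by `b` therefore squares `z`,
so `z = b³ z b⁻³ = z⁸` and `z` has order dividing `7`. The first generator `b z² b⁻¹ z` then equals
`z⁴ z = z⁵`, whose cube is `z¹⁵ = z`, and the second one is `b⁴ = b`; together they give back `z`
and `b`, which generate the quotient.
-/

open QuotientGroup

section ConjEqSq

variable {G : Type*} [Group G] {β ζ : G}

theorem pow_seven_eq_one_of_conj_eq_sq (hβ : β ^ 3 = 1) (h : β * ζ * β⁻¹ = ζ ^ 2) :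
    ζ ^ 7 = 1 := by
  have hconj : ∀ n : ℕ, β * ζ ^ n * β⁻¹ = ζ ^ (2 * n) := fun n => by
    rw [← conj_pow, h, ← pow_mul]
  have hζ : ζ = ζ ^ 8 := calc
    ζ = β ^ 3 * ζ * (β ^ 3)⁻¹ := by rw [hβ]; group
    _ = β * (β * (β * ζ ^ 1 * β⁻¹) * β⁻¹) * β⁻¹ := by
      simp only [pow_succ, pow_zero, one_mul, mul_inv_rev, mul_assoc]
    _ = ζ ^ 8 := by rw [hconj, hconj, hconj]
  have : ζ * ζ ^ 7 = ζ * 1 := by rw [← pow_succ', mul_one, ← hζ]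
  exact mul_left_cancel this

theorem conj_sq_mul_pow_three_eq_self (hβ : β ^ 3 = 1) (h : β * ζ * β⁻¹ = ζ ^ 2) :
    (β * ζ ^ 2 * β⁻¹ * ζ) ^ 3 = ζ := calc
  (β * ζ ^ 2 * β⁻¹ * ζ) ^ 3 = ((β * ζ * β⁻¹) ^ 2 * ζ) ^ 3 := by rw [conj_pow]
  _ = ζ ^ 7 * ζ ^ 7 * ζ := by rw [h]; group
  _ = ζ := by rw [pow_seven_eq_one_of_conj_eq_sq hβ h]; group

theorem closure_pair_le_closure_conj_sq_mul_pow_four (hβ : β ^ 3 = 1)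
    (h : β * ζ * β⁻¹ = ζ ^ 2) :
    Subgroup.closure {ζ, β} ≤ Subgroup.closure {β * ζ ^ 2 * β⁻¹ * ζ, β ^ 4} := by
  set H := Subgroup.closure {β * ζ ^ 2 * β⁻¹ * ζ, β ^ 4}
  have hζ : ζ ∈ H := by
    rw [← conj_sq_mul_pow_three_eq_self hβ h]
    exact H.pow_mem (Subgroup.subset_closure (Set.mem_insert _ _)) 3
  have hβH : β ∈ H := by
    have h4 : β ^ 4 = β := by rw [pow_succ', hβ, mul_one]
    rw [← h4]
    exact Subgroup.subset_closure (Set.mem_insert_of_mem _ rfl)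
  exact (Subgroup.closure_le H).mpr (Set.insert_subset hζ (Set.singleton_subset_iff.mpr hβH))

end ConjEqSq

theorem closure_mk_z_mk_b_eq_top (N : Subgroup GammaBar) [N.Normal] :
    Subgroup.closure {(z : GammaBar ⧸ N), (b : GammaBar ⧸ N)} = ⊤ := by
  have hrange : Set.range (PresentedGroup.of (rels := rels)) = {z, b} := by
    ext x
    simp only [Set.mem_range, Set.mem_insert_iff, Set.mem_singleton_iff, Fin.exists_fin_two]
    simp only [z, b, eq_comm]
  rw [← Subgroup.map_top_of_surjective (mk' N) (mk'_surjective N),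
    ← PresentedGroup.closure_range_of rels, MonoidHom.map_closure, hrange, Set.image_pair]
  rfl

theorem mk_b_pow_three_eq_one [GammaY.Normal] : (b : GammaBar ⧸ GammaY) ^ 3 = 1 := by
  rw [← mk_pow, eq_one_iff]
  exact Subgroup.subset_closure (by simp)

theorem mk_b_conj_mk_z_eq_sq [GammaY.Normal] :
    (b : GammaBar ⧸ GammaY) * z * (b : GammaBar ⧸ GammaY)⁻¹ = (z : GammaBar ⧸ GammaY) ^ 2 := by
  have hrel : ((b * z * b ^ 2 * z ^ (-2 : ℤ) : GammaBar) : GammaBar ⧸ GammaY) = 1 :=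
    (eq_one_iff _).mpr (Subgroup.subset_closure (by simp))
  have hb_inv : (b : GammaBar ⧸ GammaY)⁻¹ = (b : GammaBar ⧸ GammaY) ^ 2 :=
    inv_eq_of_mul_eq_one_right (by rw [← pow_succ', mk_b_pow_three_eq_one])
  simp only [mk_mul, mk_pow, zpow_neg, zpow_ofNat] at hrel
  rwa [hb_inv, ← mul_inv_eq_one]

/-- The images of `bz²b⁻¹z` and `b⁴` under the quotient map `Γ̄ → Γ̄/Γ_Y`
generate the quotient group `Γ̄/Γ_Y`. -/
theorem images_generate_quotient_GammaY [GammaY.Normal] :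
    Subgroup.closure
      {QuotientGroup.mk (b * z ^ 2 * b⁻¹ * z),
       (QuotientGroup.mk (b ^ 4) : GammaBar ⧸ GammaY)} = ⊤ := by
  rw [eq_top_iff, ← closure_mk_z_mk_b_eq_top GammaY]
  simp only [mk_mul, mk_pow, mk_inv]
  exact closure_pair_le_closure_conj_sq_mul_pow_four mk_b_pow_three_eq_one mk_b_conj_mk_z_eq_sq
end
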